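/- Covariance simplification under the null hypothesis in the AR-ARCH model: for all real y and z, Φ(min(y,z)) − Φ(y)Φ(z) + φ(y)·(∫ x·1{x ≤ z} dγ(x) + y·∫ (x² − 1)·1{x ≤ z} dγ(x)) + φ(z)·(∫ x·1{x ≤ y} dγ(x) + z·∫ (x² − 1)·1{x ≤ y} dγ(x)) + φ(y)φ(z)·(1 + (y+z)·∫ x³ dγ(x) + y·z·(∫ x⁴ dγ(x) − 1)) = Φ(min(y,z)) − Φ(y)Φ(z) − φ(y)φ(z). (This identifies the limiting covariance of the residual empirical process in the AR-ARCH model with Gaussian innovations as the covariance Φ(y∧z) − Φ(y)Φ(z) − φ(y)φ(z).) -/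

import Mathlib

/-!
Write `φ` for the standard Gaussian density. Since `φ' = -X φ`, every polynomial `q` satisfies
`(q φ)' = (q' - X q) φ`, and `q φ` vanishes at `±∞`. Integrating, `∫_{x ≤ z} (q' - X q) dγ = q(z) φ(z)`
and `∫ (q' - X q) dγ = 0`. The choices `q = -1, -X, -(X² + 2), -(X³ + 3X)` give
`∫_{x ≤ z} x dγ = -φ(z)`, `∫_{x ≤ z} (x² - 1) dγ = -z φ(z)`, `∫ x³ dγ = 0` and `∫ x⁴ dγ = 3`,
and the identity becomes a ring computation.
-/

open MeasureTheory ProbabilityTheory Real Filter Set Topology Polynomial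
open scoped NNReal

namespace ProbabilityTheory

section Density

variable {μ : ℝ} {v : ℝ≥0}

lemma setIntegral_gaussianReal_eq_setIntegral_smul {E : Type*} [NormedAddCommGroup E]
    [NormedSpace ℝ E] {f : ℝ → E} (hv : v ≠ 0) {s : Set ℝ} (hs : MeasurableSet s) :
    ∫ x in s, f x ∂gaussianReal μ v = ∫ x in s, gaussianPDFReal μ v x • f x := by
  simp [gaussianReal, hv, setIntegral_withDensity_eq_setIntegral_toReal_smul
    (measurable_gaussianPDF _ _) (ae_of_all _ fun _ ↦ gaussianPDF_lt_top) _ hs]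

lemma integrable_gaussianReal_iff {E : Type*} [NormedAddCommGroup E]
    [NormedSpace ℝ E] {f : ℝ → E} (hv : v ≠ 0) :
    Integrable f (gaussianReal μ v) ↔ Integrable (fun x ↦ gaussianPDFReal μ v x • f x) := by
  rw [gaussianReal_of_var_ne_zero _ hv,
    integrable_withDensity_iff_integrable_smul' (measurable_gaussianPDF _ _)
      (ae_of_all _ fun _ ↦ gaussianPDF_lt_top)]
  simp [toReal_gaussianPDF]

lemma integrable_eval_gaussianReal (q : ℝ[X]) :
    Integrable (fun x ↦ q.eval x) (gaussianReal μ v) := by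
  induction q using Polynomial.induction_on' with
  | add p q hp hq => simp only [eval_add]; exact hp.add hq
  | monomial n c =>
    have hpow : Integrable (fun x : ℝ ↦ x ^ n) (gaussianReal μ v) :=
      (memLp_id_gaussianReal n).integrable_norm_pow'.mono' (by fun_prop)
        (ae_of_all _ fun x ↦ by simp [norm_pow])
    simpa using hpow.const_mul c

end Density

lemma gaussianPDFReal_zero_one (x : ℝ) :
    gaussianPDFReal 0 1 x = (√(2 * π))⁻¹ * rexp (-x ^ 2 / 2) := by
  simp [gaussianPDFReal]

lemma hasDerivAt_gaussianPDFReal_zero_one (x : ℝ) :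
    HasDerivAt (gaussianPDFReal 0 1) (-x * gaussianPDFReal 0 1 x) x := by
  have hexponent : HasDerivAt (fun x : ℝ ↦ -x ^ 2 / 2) (-x) x := by
    refine ((hasDerivAt_pow 2 x).fun_neg.div_const 2).congr_deriv ?_
    push_cast
    ring
  rw [funext gaussianPDFReal_zero_one]
  refine (hexponent.exp.const_mul (√(2 * π))⁻¹).congr_deriv ?_
  ring

lemma tendsto_eval_mul_gaussianPDFReal_cocompact (q : ℝ[X]) :
    Tendsto (fun x ↦ q.eval x * gaussianPDFReal 0 1 x) (cocompact ℝ) (𝓝 0) := by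
  induction q using Polynomial.induction_on' with
  | add p q hp hq => simpa [add_mul] using hp.add hq
  | monomial n c =>
    have hnorm (x : ℝ) :
        ‖x ^ n * rexp (-x ^ 2 / 2)‖ = |x| ^ (n : ℝ) * rexp (-(1 / 2) * x ^ 2) := by
      rw [norm_mul, norm_pow, Real.norm_eq_abs, Real.norm_of_nonneg (exp_pos _).le,
        Real.rpow_natCast]
      ring_nf
    have hpow : Tendsto (fun x : ℝ ↦ x ^ n * rexp (-x ^ 2 / 2)) (cocompact ℝ) (𝓝 0) :=
      squeeze_zero_norm (fun x ↦ (hnorm x).le)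
        (tendsto_rpow_abs_mul_exp_neg_mul_sq_cocompact one_half_pos n)
    simpa [gaussianPDFReal_zero_one, mul_assoc, mul_left_comm] using
      hpow.const_mul (c * (√(2 * π))⁻¹)

noncomputable def gaussianSteinOp (q : ℝ[X]) : ℝ[X] := derivative q - X * q

lemma hasDerivAt_eval_mul_gaussianPDFReal (q : ℝ[X]) (x : ℝ) :
    HasDerivAt (fun x ↦ q.eval x * gaussianPDFReal 0 1 x)
      ((gaussianSteinOp q).eval x * gaussianPDFReal 0 1 x) x := by
  refine ((q.hasDerivAt x).mul (hasDerivAt_gaussianPDFReal_zero_one x)).congr_deriv ?_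
  simp only [gaussianSteinOp, eval_sub, eval_mul, eval_X]
  ring

lemma integrable_eval_mul_gaussianPDFReal (q : ℝ[X]) :
    Integrable (fun x ↦ q.eval x * gaussianPDFReal 0 1 x) := by
  simpa only [smul_eq_mul, mul_comm] using
    (integrable_gaussianReal_iff one_ne_zero).1 (integrable_eval_gaussianReal q)

lemma setIntegral_Iic_gaussianSteinOp (q : ℝ[X]) (z : ℝ) :
    ∫ x in Iic z, (gaussianSteinOp q).eval x ∂gaussianReal 0 1
      = q.eval z * gaussianPDFReal 0 1 z := by
  rw [setIntegral_gaussianReal_eq_setIntegral_smul one_ne_zero measurableSet_Iic]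
  simp only [smul_eq_mul, mul_comm (gaussianPDFReal 0 1 _)]
  rw [integral_Iic_of_hasDerivAt_of_tendsto'
    (fun x _ ↦ hasDerivAt_eval_mul_gaussianPDFReal q x)
    (integrable_eval_mul_gaussianPDFReal _).integrableOn
    ((tendsto_eval_mul_gaussianPDFReal_cocompact q).mono_left atBot_le_cocompact), sub_zero]

lemma integral_gaussianSteinOp (q : ℝ[X]) :
    ∫ x, (gaussianSteinOp q).eval x ∂gaussianReal 0 1 = 0 := by
  rw [integral_gaussianReal_eq_integral_smul one_ne_zero]
  simp only [smul_eq_mul, mul_comm (gaussianPDFReal 0 1 _)]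
  rw [integral_of_hasDerivAt_of_tendsto (hasDerivAt_eval_mul_gaussianPDFReal q)
    (integrable_eval_mul_gaussianPDFReal _)
    ((tendsto_eval_mul_gaussianPDFReal_cocompact q).mono_left atBot_le_cocompact)
    ((tendsto_eval_mul_gaussianPDFReal_cocompact q).mono_left atTop_le_cocompact), sub_zero]

lemma setIntegral_Iic_id_gaussianReal (z : ℝ) :
    ∫ x in Iic z, x ∂gaussianReal 0 1 = -gaussianPDFReal 0 1 z := by
  simpa [gaussianSteinOp] using setIntegral_Iic_gaussianSteinOp (-1) z

lemma setIntegral_Iic_sq_sub_one_gaussianReal (z : ℝ) :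
    ∫ x in Iic z, (x ^ 2 - 1) ∂gaussianReal 0 1 = -(z * gaussianPDFReal 0 1 z) := by
  have hstein : gaussianSteinOp (-X) = X ^ 2 - 1 := by simp [gaussianSteinOp]; ring
  have h := setIntegral_Iic_gaussianSteinOp (-X) z
  rw [hstein] at h
  simpa using h

lemma integral_pow_three_gaussianReal : ∫ x, x ^ 3 ∂gaussianReal 0 1 = 0 := by
  have hstein : gaussianSteinOp (-(X ^ 2 + 2)) = X ^ 3 := by simp [gaussianSteinOp]; ring
  have h := integral_gaussianSteinOp (-(X ^ 2 + 2))
  rw [hstein] at h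
  simpa using h

lemma integral_pow_four_gaussianReal : ∫ x, x ^ 4 ∂gaussianReal 0 1 = 3 := by
  have hstein : gaussianSteinOp (-(X ^ 3 + 3 * X)) = X ^ 4 - 3 := by
    simp [gaussianSteinOp, C_ofNat]; ring
  have h := integral_gaussianSteinOp (-(X ^ 3 + 3 * X))
  simp only [hstein, eval_sub] at h
  rw [integral_sub (integrable_eval_gaussianReal _) (integrable_eval_gaussianReal _)] at h
  simpa [sub_eq_zero] using h

end ProbabilityTheory

theorem stmt_2_general (φ Φ : ℝ → ℝ)
    (hφ : ∀ x, φ x = (Real.sqrt (2 * π))⁻¹ * Real.exp (-x ^ 2 / 2)) :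
    ∀ y z : ℝ,
      Φ (min y z) - Φ y * Φ z
        + φ y * ((∫ x in Set.Iic z, x ∂(gaussianReal 0 1))
            + y * ∫ x in Set.Iic z, (x ^ 2 - 1) ∂(gaussianReal 0 1))
        + φ z * ((∫ x in Set.Iic y, x ∂(gaussianReal 0 1))
            + z * ∫ x in Set.Iic y, (x ^ 2 - 1) ∂(gaussianReal 0 1))
        + φ y * φ z * (1 + (y + z) * (∫ x, x ^ 3 ∂(gaussianReal 0 1))
            + y * z * ((∫ x, x ^ 4 ∂(gaussianReal 0 1)) - 1))
      = Φ (min y z) - Φ y * Φ z - φ y * φ z := by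
  obtain rfl : φ = gaussianPDFReal 0 1 := funext fun x ↦ by rw [hφ, gaussianPDFReal_zero_one]
  intro y z
  rw [setIntegral_Iic_id_gaussianReal, setIntegral_Iic_id_gaussianReal,
    setIntegral_Iic_sq_sub_one_gaussianReal, setIntegral_Iic_sq_sub_one_gaussianReal,
    integral_pow_three_gaussianReal, integral_pow_four_gaussianReal]
  ring

/-- Covariance simplification under the null hypothesis in the AR-ARCH model:
the limiting covariance of the residual empirical process with Gaussian
innovations equals `Φ(y∧z) - Φ(y)Φ(z) - φ(y)φ(z)`. -/
theorem stmt_2 (φ Φ : ℝ → ℝ)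
    (hφ : ∀ x, φ x = (Real.sqrt (2 * π))⁻¹ * Real.exp (-x ^ 2 / 2))
    (hΦ : ∀ y, Φ y = ((gaussianReal 0 1) (Set.Iic y)).toReal) :
    ∀ y z : ℝ,
      Φ (min y z) - Φ y * Φ z
        + φ y * ((∫ x in Set.Iic z, x ∂(gaussianReal 0 1))
            + y * ∫ x in Set.Iic z, (x ^ 2 - 1) ∂(gaussianReal 0 1))
        + φ z * ((∫ x in Set.Iic y, x ∂(gaussianReal 0 1))
            + z * ∫ x in Set.Iic y, (x ^ 2 - 1) ∂(gaussianReal 0 1))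
        + φ y * φ z * (1 + (y + z) * (∫ x, x ^ 3 ∂(gaussianReal 0 1))
            + y * z * ((∫ x, x ^ 4 ∂(gaussianReal 0 1)) - 1))
      = Φ (min y z) - Φ y * Φ z - φ y * φ z :=
  stmt_2_general φ Φ hφ
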